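/- Let μ be the weak limit of the measures μ_s from the recursive construction. Then for every integer n ∈ ℤ, the total mass of μ on the interval (n - 1/3, n + 1/3) equals 1, and supp μ ⊆ ⋃_{n∈ℤ} (n - 1/3, n + 1/3). -/
import Mathlib


open MeasureTheory
open scoped ENNReal

/-- `r k = 2^{-(k+1)^2}`. -/
noncomputable def r (k : ℕ) : ℝ := (2 : ℝ) ^ (-(((k : ℤ) + 1) ^ 2))

/-- `S t` is the shift of a measure by `t`. -/
noncomputable def S (t : ℝ) (ρ : Measure ℝ) : Measure ℝ := ρ.map (· + t)

/-- `T k` averages the `2k` shifts by `± r_k j / k`, `j = 1, …, k`. -/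
noncomputable def T (k : ℕ) (ρ : Measure ℝ) : Measure ℝ :=
  ((2 * k : ℝ≥0∞))⁻¹ •
    ∑ j ∈ Finset.Icc 1 k, (S (-(r k * j / k)) ρ + S (r k * j / k) ρ)

/-- `μ_0 = δ_0`, `μ_k = μ_{k-1} + (S_{-3^{k-1}} + S_{3^{k-1}}) T_k μ_{k-1}`. -/
noncomputable def μseq : ℕ → Measure ℝ
  | 0 => Measure.dirac 0
  | k + 1 => μseq k +
      (S (-(3 ^ k : ℝ)) (T (k + 1) (μseq k)) + S ((3 ^ k : ℝ)) (T (k + 1) (μseq k)))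

/-- The interval `I_s = ((1-3^s)/2 - 1/3, (3^s-1)/2 + 1/3)`. -/
noncomputable def I (s : ℕ) : Set ℝ :=
  Set.Ioo ((1 - 3 ^ s) / 2 - 1 / 3) ((3 ^ s - 1) / 2 + 1 / 3)

/-! ### Auxiliary definitions -/

/-- cumulative shift radius: `dd s = ∑_{i=1}^s r i`. -/
noncomputable def dd : ℕ → ℝ
  | 0 => 0
  | s + 1 => dd s + r (s + 1)

/-- small closed ball of radius `d` around the integer `c`. -/
def bl (d : ℝ) (c : ℤ) : Set ℝ := Set.Icc ((c : ℝ) - d) ((c : ℝ) + d)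

/-- union of small balls around all integers. -/
def EE (s : ℕ) : Set ℝ := ⋃ n : ℤ, bl (dd s) n

lemma bl_meas (d : ℝ) (c : ℤ) : MeasurableSet (bl d c) := measurableSet_Icc

lemma EE_meas (s : ℕ) : MeasurableSet (EE s) :=
  MeasurableSet.iUnion fun n => bl_meas _ n

lemma r_pos (k : ℕ) : 0 < r k := by unfold r; positivity

lemma r_le (k : ℕ) : r (k + 1) ≤ 1 / 16 := by
  have hexp : -((((k + 1) : ℕ) : ℤ) + 1) ^ 2 ≤ (-4 : ℤ) := by
    push_cast
    nlinarith [Int.natCast_nonneg k]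
  have h : r (k + 1) ≤ (2 : ℝ) ^ (-4 : ℤ) := zpow_le_zpow_right₀ one_le_two hexp
  have h2 : (2 : ℝ) ^ (-4 : ℤ) = 1 / 16 := by norm_num
  exact le_of_le_of_eq h h2

lemma dd_nonneg (s : ℕ) : 0 ≤ dd s := by
  induction s with
  | zero => simp [dd]
  | succ k ih => rw [dd]; have := r_pos (k + 1); linarith

lemma dd_bound (s : ℕ) : dd s ≤ 1 / 8 - (2 : ℝ) ^ (-(s : ℤ) - 3) := by
  induction s with
  | zero => norm_num [dd]
  | succ k ih =>
    rw [dd]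
    have hexp : -((((k + 1) : ℕ) : ℤ) + 1) ^ 2 ≤ -(k : ℤ) - 4 := by
      push_cast
      nlinarith [Int.natCast_nonneg k]
    have h1 : r (k + 1) ≤ (2 : ℝ) ^ (-(k : ℤ) - 4) := zpow_le_zpow_right₀ one_le_two hexp
    have h2 : (2 : ℝ) ^ (-(k : ℤ) - 3) = 2 * (2 : ℝ) ^ (-(k : ℤ) - 4) := by
      rw [show (-(k : ℤ) - 3) = (-(k : ℤ) - 4) + 1 by ring, zpow_add_one₀ two_ne_zero]
      ring
    have h3 : (-(((k : ℕ) + 1 : ℕ) : ℤ) - 3) = (-(k : ℤ) - 4) := by push_cast; ring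
    rw [h3]
    linarith

lemma dd_le (s : ℕ) : dd s ≤ 1 / 8 := by
  have := dd_bound s
  have h2 : (0 : ℝ) < (2 : ℝ) ^ (-(s : ℤ) - 3) := by positivity
  linarith

/-- Key localization: if `ρ` lives on the union of the balls `bl d n`, then the `ρ`-measure of
any set squeezed between `bl d c` and `(c - 1/2, c + 1/2)` equals that of `bl d c`. -/
lemma blSlice (ρ : Measure ℝ) (d : ℝ) (hd : d ≤ 1 / 8)
    (hρ : ρ ((⋃ n : ℤ, bl d n)ᶜ) = 0)
    (c : ℤ) (B : Set ℝ) (hB1 : bl d c ⊆ B)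
    (hB2 : B ⊆ Set.Ioo ((c : ℝ) - 1 / 2) ((c : ℝ) + 1 / 2)) :
    ρ B = ρ (bl d c) := by
  have hE : MeasurableSet (⋃ n : ℤ, bl d n) := MeasurableSet.iUnion fun n => bl_meas _ n
  have hBE : B ∩ (⋃ n : ℤ, bl d n) = bl d c := by
    apply subset_antisymm
    · rintro x ⟨hxB, hxE⟩
      rw [Set.mem_iUnion] at hxE
      obtain ⟨m, hm⟩ := hxE
      rw [bl, Set.mem_Icc] at hm
      have hx1 := (hB2 hxB).1
      have hx2 := (hB2 hxB).2
      have hmc : m = c := by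
        have habs : |(m : ℝ) - (c : ℝ)| < 1 := by
          rw [abs_sub_lt_iff]; constructor <;> linarith
        have h2 : |((m - c : ℤ) : ℝ)| < 1 := by push_cast; exact habs
        have h3 : |m - c| < 1 := by exact_mod_cast h2
        rw [Int.abs_eq_natAbs] at h3
        omega
      subst hmc
      rw [bl, Set.mem_Icc]; exact hm
    · intro x hx; exact ⟨hB1 hx, Set.mem_iUnion.2 ⟨c, hx⟩⟩
  have hdiff : ρ (B \ (⋃ n : ℤ, bl d n)) = 0 :=
    measure_mono_null (fun x hx => hx.2) hρ
  calc ρ B = ρ (B ∩ (⋃ n : ℤ, bl d n)) + ρ (B \ (⋃ n : ℤ, bl d n)) :=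
        (measure_inter_add_diff B hE).symm
    _ = ρ (bl d c) := by rw [hBE, hdiff, add_zero]

lemma S_apply (t : ℝ) (ρ : Measure ℝ) {B : Set ℝ} (hB : MeasurableSet B) :
    S t ρ B = ρ ((· + t) ⁻¹' B) :=
  Measure.map_apply (measurable_add_const t) hB

lemma T_apply (k : ℕ) (ρ : Measure ℝ) {B : Set ℝ} (hB : MeasurableSet B) :
    T k ρ B = ((2 * k : ℝ≥0∞))⁻¹ * ∑ j ∈ Finset.Icc 1 k,
      (ρ ((· + (-(r k * j / k))) ⁻¹' B) + ρ ((· + (r k * j / k)) ⁻¹' B)) := by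
  rw [T, Measure.smul_apply, smul_eq_mul, Measure.finset_sum_apply]
  congr 1
  refine Finset.sum_congr rfl fun j hj => ?_
  rw [Measure.add_apply, S_apply _ _ hB, S_apply _ _ hB]

/-- The main invariant for the recursive construction. -/
lemma mu_inv (s : ℕ) :
    (∀ c : ℤ, μseq s (bl (dd s) c) = if 2 * c.natAbs + 1 ≤ 3 ^ s then 1 else 0)
    ∧ μseq s (EE s)ᶜ = 0 := by
  induction s with
  | zero =>
    constructor
    · intro c
      have h0 : μseq 0 = Measure.dirac 0 := rfl
      rw [h0, Measure.dirac_apply' _ (bl_meas _ _)]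
      by_cases hc : c = 0
      · subst hc
        have hmem : (0 : ℝ) ∈ bl (dd 0) 0 := by
          rw [bl, Set.mem_Icc]; simp [dd]
        rw [Set.indicator_of_mem hmem, if_pos (by norm_num)]
        rfl
      · have hmem : (0 : ℝ) ∉ bl (dd 0) c := by
          rw [bl, Set.mem_Icc]
          simp only [dd]
          rintro ⟨h1, h2⟩
          have hc0 : (c : ℝ) = 0 := by linarith
          exact hc (by exact_mod_cast hc0)
        rw [Set.indicator_of_notMem hmem, if_neg (by simp only [pow_zero]; omega)]
    · have h0 : μseq 0 = Measure.dirac 0 := rfl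
      rw [h0, Measure.dirac_apply' _ (EE_meas 0).compl]
      apply Set.indicator_of_notMem
      simp only [Set.mem_compl_iff, not_not]
      refine Set.mem_iUnion.2 ⟨0, ?_⟩
      rw [bl, Set.mem_Icc]; simp [dd]
  | succ s ih =>
    obtain ⟨iha, ihb⟩ := ih
    have hr1 : 0 < r (s + 1) := r_pos _
    have hr2 : r (s + 1) ≤ 1 / 16 := r_le s
    have hd0 : 0 ≤ dd s := dd_nonneg s
    have hd8 : dd s ≤ 1 / 8 := dd_le s
    have hdd1 : dd (s + 1) = dd s + r (s + 1) := rfl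
    have ihb' : μseq s ((⋃ n : ℤ, bl (dd s) n)ᶜ) = 0 := ihb
    -- key computation: measure of a slightly shifted enlarged ball
    have key : ∀ (c : ℤ) (a : ℝ), |a| ≤ r (s + 1) →
        μseq s ((· + a) ⁻¹' bl (dd (s + 1)) c)
          = (if 2 * c.natAbs + 1 ≤ 3 ^ s then 1 else 0) := by
      intro c a ha
      obtain ⟨ha1, ha2⟩ := abs_le.mp ha
      rw [show (· + a) ⁻¹' bl (dd (s + 1)) c
            = Set.Icc ((c : ℝ) - dd (s + 1) - a) ((c : ℝ) + dd (s + 1) - a) by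
          rw [bl, Set.preimage_add_const_Icc]]
      rw [← iha c]
      apply blSlice (μseq s) (dd s) hd8 ihb' c
      · intro x hx
        rw [bl, Set.mem_Icc] at hx
        rw [Set.mem_Icc, hdd1]
        constructor <;> linarith [hx.1, hx.2]
      · intro x hx
        rw [Set.mem_Icc, hdd1] at hx
        rw [Set.mem_Ioo]
        constructor <;> linarith [hx.1, hx.2]
    -- bound on the small shifts appearing in T
    have hjr : ∀ j : ℕ, j ≤ s + 1 → |r (s + 1) * (j : ℝ) / ((s + 1 : ℕ) : ℝ)| ≤ r (s + 1) := by
      intro j hj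
      have hpos : (0 : ℝ) < ((s + 1 : ℕ) : ℝ) := by exact_mod_cast Nat.succ_pos s
      have h0 : 0 ≤ r (s + 1) * (j : ℝ) / ((s + 1 : ℕ) : ℝ) :=
        div_nonneg (mul_nonneg hr1.le (Nat.cast_nonneg j)) hpos.le
      rw [abs_of_nonneg h0, div_le_iff₀ hpos]
      have hj2 : (j : ℝ) ≤ ((s + 1 : ℕ) : ℝ) := by exact_mod_cast hj
      nlinarith
    -- value of T (s+1) (μseq s) on enlarged balls
    have Tval : ∀ c : ℤ, T (s + 1) (μseq s) (bl (dd (s + 1)) c)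
        = (if 2 * c.natAbs + 1 ≤ 3 ^ s then 1 else 0) := by
      intro c
      rw [T_apply _ _ (bl_meas _ _)]
      have hterm : ∀ j ∈ Finset.Icc 1 (s + 1),
          (μseq s ((· + (-(r (s + 1) * (j : ℝ) / ((s + 1 : ℕ) : ℝ)))) ⁻¹' bl (dd (s + 1)) c)
            + μseq s ((· + (r (s + 1) * (j : ℝ) / ((s + 1 : ℕ) : ℝ))) ⁻¹' bl (dd (s + 1)) c))
          = (if 2 * c.natAbs + 1 ≤ 3 ^ s then 1 else 0)
            + (if 2 * c.natAbs + 1 ≤ 3 ^ s then 1 else 0) := by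
        intro j hj
        rw [Finset.mem_Icc] at hj
        rw [key c _ (by rw [abs_neg]; exact hjr j hj.2), key c _ (hjr j hj.2)]
      rw [Finset.sum_congr rfl hterm, Finset.sum_const, Nat.card_Icc]
      simp only [Nat.add_sub_cancel, nsmul_eq_mul]
      set v : ℝ≥0∞ := if 2 * c.natAbs + 1 ≤ 3 ^ s then 1 else 0 with hv
      have hk0 : ((s + 1 : ℕ) : ℝ≥0∞) ≠ 0 := by exact_mod_cast Nat.succ_ne_zero s
      have hkt : ((s + 1 : ℕ) : ℝ≥0∞) ≠ ⊤ := ENNReal.natCast_ne_top _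
      have hring : ((s + 1 : ℕ) : ℝ≥0∞) * (v + v) = (2 * ((s + 1 : ℕ) : ℝ≥0∞)) * v := by
        ring
      rw [hring, ← mul_assoc, ENNReal.inv_mul_cancel (by simp [hk0])
        (ENNReal.mul_ne_top (by simp) hkt), one_mul]
    -- preimages of balls under the big integer shifts
    have hshift_neg : ∀ c : ℤ, (· + (-(3 : ℝ) ^ s)) ⁻¹' bl (dd (s + 1)) c
        = bl (dd (s + 1)) (c + 3 ^ s) := by
      intro c
      rw [bl, Set.preimage_add_const_Icc, bl]
      congr 1 <;> push_cast <;> ring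
    have hshift_pos : ∀ c : ℤ, (· + ((3 : ℝ) ^ s)) ⁻¹' bl (dd (s + 1)) c
        = bl (dd (s + 1)) (c - 3 ^ s) := by
      intro c
      rw [bl, Set.preimage_add_const_Icc, bl]
      congr 1 <;> push_cast <;> ring
    have hmu : μseq (s + 1) = μseq s +
        (S (-(3 ^ s : ℝ)) (T (s + 1) (μseq s)) + S ((3 ^ s : ℝ)) (T (s + 1) (μseq s))) := rfl
    constructor
    · intro c
      rw [hmu, Measure.add_apply, Measure.add_apply,
          S_apply _ _ (bl_meas _ _), S_apply _ _ (bl_meas _ _),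
          hshift_neg c, hshift_pos c, Tval (c + 3 ^ s), Tval (c - 3 ^ s)]
      have hmid : μseq s (bl (dd (s + 1)) c)
          = (if 2 * c.natAbs + 1 ≤ 3 ^ s then 1 else 0) := by
        have h := key c 0 (by rw [abs_zero]; linarith)
        simpa using h
      rw [hmid]
      -- now pure integer arithmetic on the if-conditions
      have hz : (3 : ℤ) ^ s = ((3 ^ s : ℕ) : ℤ) := by push_cast; ring
      have hp : (3 : ℕ) ^ (s + 1) = 3 * 3 ^ s := by ring
      rw [hz, hp]
      have hN : 1 ≤ 3 ^ s := Nat.one_le_pow s 3 (by norm_num)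
      have hodd : 3 ^ s % 2 = 1 := by norm_num [Nat.pow_mod]
      clear hz hp hmid key Tval iha ihb ihb' hjr hshift_neg hshift_pos hmu
      generalize hNN : (3 : ℕ) ^ s = N at hN hodd ⊢
      clear hNN
      split_ifs
      all_goals try omega
      all_goals norm_num
    · rw [hmu, Measure.add_apply, Measure.add_apply]
      have hEsub : (EE (s + 1))ᶜ ⊆ (EE s)ᶜ := by
        apply Set.compl_subset_compl.2
        intro x hx
        rw [EE, Set.mem_iUnion] at hx ⊢
        obtain ⟨m, hm⟩ := hx
        refine ⟨m, ?_⟩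
        rw [bl, Set.mem_Icc] at hm ⊢
        rw [hdd1]
        constructor <;> linarith [hm.1, hm.2]
      have h1 : μseq s (EE (s + 1))ᶜ = 0 := measure_mono_null hEsub ihb
      -- T of the complement is zero
      have hT : ∀ a : ℝ, |a| ≤ r (s + 1) →
          μseq s ((· + a) ⁻¹' (EE (s + 1))ᶜ) = 0 := by
        intro a ha
        obtain ⟨ha1, ha2⟩ := abs_le.mp ha
        apply measure_mono_null _ ihb
        intro x hx
        rw [Set.mem_preimage, Set.mem_compl_iff] at hx
        rw [Set.mem_compl_iff]
        intro hxE
        apply hx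
        rw [EE, Set.mem_iUnion] at hxE ⊢
        obtain ⟨m, hm⟩ := hxE
        refine ⟨m, ?_⟩
        rw [bl, Set.mem_Icc] at hm ⊢
        rw [hdd1]
        constructor <;> linarith [hm.1, hm.2]
      have hTzero : T (s + 1) (μseq s) (EE (s + 1))ᶜ = 0 := by
        rw [T_apply _ _ (EE_meas (s + 1)).compl]
        rw [Finset.sum_eq_zero, mul_zero]
        intro j hj
        rw [Finset.mem_Icc] at hj
        rw [hT _ (by rw [abs_neg]; exact hjr j hj.2), hT _ (hjr j hj.2), add_zero]
      -- the complement is invariant under integer shifts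
      have hinv : ∀ z : ℤ, (· + (z : ℝ)) ⁻¹' (EE (s + 1))ᶜ = (EE (s + 1))ᶜ := by
        intro z
        rw [Set.preimage_compl]
        congr 1
        apply subset_antisymm
        · intro x hx
          rw [Set.mem_preimage, EE, Set.mem_iUnion] at hx
          obtain ⟨m, hm⟩ := hx
          rw [EE, Set.mem_iUnion]
          refine ⟨m - z, ?_⟩
          rw [bl, Set.mem_Icc] at hm ⊢
          push_cast at hm ⊢
          constructor <;> linarith [hm.1, hm.2]
        · intro x hx
          rw [EE, Set.mem_iUnion] at hx
          obtain ⟨m, hm⟩ := hx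
          rw [Set.mem_preimage, EE, Set.mem_iUnion]
          refine ⟨m + z, ?_⟩
          rw [bl, Set.mem_Icc] at hm ⊢
          push_cast at hm ⊢
          constructor <;> linarith [hm.1, hm.2]
      have h2 : S (-(3 ^ s : ℝ)) (T (s + 1) (μseq s)) (EE (s + 1))ᶜ = 0 := by
        rw [S_apply _ _ (EE_meas (s + 1)).compl,
            show (-(3 : ℝ) ^ s) = (((-(3 ^ s) : ℤ)) : ℝ) by push_cast; ring,
            hinv, hTzero]
      have h3 : S ((3 ^ s : ℝ)) (T (s + 1) (μseq s)) (EE (s + 1))ᶜ = 0 := by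
        rw [S_apply _ _ (EE_meas (s + 1)).compl,
            show ((3 : ℝ) ^ s) = ((((3 ^ s) : ℤ)) : ℝ) by push_cast; ring,
            hinv, hTzero]
      rw [h1, h2, h3, add_zero, add_zero]

lemma two_mul_le_pow (m : ℕ) : 2 * m + 1 ≤ 3 ^ m := by
  induction m with
  | zero => norm_num
  | succ k ih =>
    have h : 3 ^ (k + 1) = 3 * 3 ^ k := by ring
    omega

/-- If `μ` is the limit measure (its restriction to each `I_s` is `μ_s`), then `μ` has total
mass `1` on each interval `(n - 1/3, n + 1/3)`, `n ∈ ℤ`, and is supported on the union of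
these intervals. -/
theorem mu_limit_mass_one (μ : Measure ℝ) (hμ : ∀ s : ℕ, μ.restrict (I s) = μseq s) :
    (∀ n : ℤ, μ (Set.Ioo ((n : ℝ) - 1 / 3) ((n : ℝ) + 1 / 3)) = 1) ∧
    μ ((⋃ n : ℤ, Set.Ioo ((n : ℝ) - 1 / 3) ((n : ℝ) + 1 / 3))ᶜ) = 0 := by
  have hJI : ∀ n : ℤ, ∀ s : ℕ, 2 * n.natAbs + 1 ≤ 3 ^ s →
      Set.Ioo ((n : ℝ) - 1 / 3) ((n : ℝ) + 1 / 3) ⊆ I s := by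
    intro n s hs
    have hcast : 2 * |(n : ℝ)| + 1 ≤ (3 : ℝ) ^ s := by
      have h2 : ((2 * n.natAbs + 1 : ℕ) : ℝ) ≤ ((3 ^ s : ℕ) : ℝ) := by exact_mod_cast hs
      push_cast at h2
      rwa [Nat.cast_natAbs, Int.cast_abs] at h2
    have h1 : -|(n : ℝ)| ≤ (n : ℝ) := neg_abs_le _
    have h2 : (n : ℝ) ≤ |(n : ℝ)| := le_abs_self _
    intro x hx
    rw [Set.mem_Ioo] at hx
    rw [I, Set.mem_Ioo]
    constructor <;> [linarith [hx.1]; linarith [hx.2]]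
  have hmass : ∀ (n : ℤ) (s : ℕ), 2 * n.natAbs + 1 ≤ 3 ^ s →
      μ (Set.Ioo ((n : ℝ) - 1 / 3) ((n : ℝ) + 1 / 3)) = 1 := by
    intro n s hs
    have hsub := hJI n s hs
    have hslice : μseq s (Set.Ioo ((n : ℝ) - 1 / 3) ((n : ℝ) + 1 / 3))
        = μseq s (bl (dd s) n) := by
      have hnull : μseq s ((⋃ m : ℤ, bl (dd s) m)ᶜ) = 0 := (mu_inv s).2
      apply blSlice (μseq s) (dd s) (dd_le s) hnull n
      · intro x hx
        rw [bl, Set.mem_Icc] at hx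
        rw [Set.mem_Ioo]
        have := dd_le s
        have := dd_nonneg s
        constructor <;> linarith [hx.1, hx.2]
      · intro x hx
        rw [Set.mem_Ioo] at hx ⊢
        constructor <;> linarith [hx.1, hx.2]
    calc μ (Set.Ioo ((n : ℝ) - 1 / 3) ((n : ℝ) + 1 / 3))
        = μ (Set.Ioo ((n : ℝ) - 1 / 3) ((n : ℝ) + 1 / 3) ∩ I s) := by
          rw [Set.inter_eq_self_of_subset_left hsub]
      _ = μ.restrict (I s) (Set.Ioo ((n : ℝ) - 1 / 3) ((n : ℝ) + 1 / 3)) :=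
          (Measure.restrict_apply measurableSet_Ioo).symm
      _ = μseq s (Set.Ioo ((n : ℝ) - 1 / 3) ((n : ℝ) + 1 / 3)) := by rw [hμ s]
      _ = μseq s (bl (dd s) n) := hslice
      _ = 1 := by rw [(mu_inv s).1 n, if_pos hs]
  constructor
  · intro n
    exact hmass n n.natAbs (two_mul_le_pow n.natAbs)
  · set A := ⋃ n : ℤ, Set.Ioo ((n : ℝ) - 1 / 3) ((n : ℝ) + 1 / 3) with hA
    have hAm : MeasurableSet A := MeasurableSet.iUnion fun n => measurableSet_Ioo
    have hcover : Aᶜ ⊆ ⋃ s : ℕ, (Aᶜ ∩ I s) := by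
      intro x hx
      obtain ⟨s, hs⟩ : ∃ s : ℕ, 2 * |x| + 1 < (3 : ℝ) ^ s :=
        pow_unbounded_of_one_lt _ (by norm_num)
      refine Set.mem_iUnion.2 ⟨s, hx, ?_⟩
      rw [I, Set.mem_Ioo]
      have h1 : -|x| ≤ x := neg_abs_le x
      have h2 : x ≤ |x| := le_abs_self x
      have h0 : 0 ≤ |x| := abs_nonneg x
      constructor <;> linarith
    apply measure_mono_null hcover
    apply measure_iUnion_null
    intro s
    have h1 : μ (Aᶜ ∩ I s) = μseq s Aᶜ := by
      rw [← hμ s, Measure.restrict_apply hAm.compl]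
    rw [h1]
    apply measure_mono_null _ (mu_inv s).2
    apply Set.compl_subset_compl.2
    intro x hx
    rw [EE, Set.mem_iUnion] at hx
    obtain ⟨m, hm⟩ := hx
    rw [bl, Set.mem_Icc] at hm
    rw [hA, Set.mem_iUnion]
    refine ⟨m, ?_⟩
    rw [Set.mem_Ioo]
    have := dd_le s
    have := dd_nonneg s
    constructor <;> linarith [hm.1, hm.2]
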